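/- Let c be a Coxeter element of W, of order h. Then h·P ⊆ Q. Consequently, the index [P : Q] is finite and every prime number dividing [P : Q] divides h. -/

import Mathlib

/-!
Write `c = s₁ ⋯ sₙ` as a product of simple reflections; its order `h` is finite because `W`
permutes the finite spanning set `R`. A vector `x` fixed by `c` pairs to zero with every simple
coroot (the `αᵢ`-component of `x - c x` can only come from `sᵢ`, the simple roots being linearly
independent), hence is zero, since a `W`-invariant positive definite form makes the simple
coroots separate points. So for `x ∈ P` the orbit sum `∑_{k < h} cᵏ x` vanishes and
`h • x = ∑_{k < h} (x - cᵏ x)`, where each `x - w x` with `w ∈ W` lies in `Q` because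
`x - s_α x = ⟨x, α^∨⟩ α`. Then `P` embeds into `Q` via `h •`, so it is finitely generated, and
`P / Q` is a finitely generated `h`-torsion group: finite, and of order divisible only by primes
dividing `h` (Cauchy).
-/

open Module

/-- A finite, reduced, crystallographic root system spanning the `ℚ`-vector space `V`,
given together with its coroots (viewed as linear functionals via the pairing
`⟨·, α^∨⟩`). -/
structure RootSystemData (V : Type*) [AddCommGroup V] [Module ℚ V] where
  /-- The set of roots `R ⊆ V`. -/
  roots : Set V
  finite : roots.Finite
  zero_not_mem : (0 : V) ∉ roots
  span_eq_top : Submodule.span ℚ roots = ⊤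
  /-- The coroot pairing `x ↦ ⟨x, α^∨⟩`. -/
  coroot : V → (V →ₗ[ℚ] ℚ)
  coroot_self : ∀ α ∈ roots, coroot α α = 2
  /-- Each reflection `s_α : x ↦ x - ⟨x, α^∨⟩α` maps `R` into itself. -/
  reflection_mem : ∀ α ∈ roots, ∀ β ∈ roots, β - coroot α β • α ∈ roots
  /-- Crystallographic condition: `⟨β, α^∨⟩ ∈ ℤ` for all roots `α, β`. -/
  crystallographic : ∀ α ∈ roots, ∀ β ∈ roots, ∃ n : ℤ, coroot α β = (n : ℚ)
  /-- Reduced: the only multiples of a root `α` which are roots are `±α`. -/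
  reduced : ∀ α ∈ roots, ∀ t : ℚ, t • α ∈ roots → t = 1 ∨ t = -1

namespace RootSystemData

variable {V : Type*} [AddCommGroup V] [Module ℚ V] (RS : RootSystemData V)

/-- The reflection `s_α` in a root `α`, as a linear endomorphism of `V`. -/
def reflMap (α : V) : V →ₗ[ℚ] V :=
  LinearMap.id - LinearMap.smulRight (RS.coroot α) α

lemma reflMap_apply (α x : V) : RS.reflMap α x = x - RS.coroot α x • α := rfl

lemma reflMap_reflMap {α : V} (h2 : RS.coroot α α = 2) (x : V) :
    RS.reflMap α (RS.reflMap α x) = x := by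
  rw [reflMap_apply, reflMap_apply, map_sub, map_smul, smul_eq_mul, h2, sub_smul, mul_smul]
  have : (2 : ℚ) • α = α + α := two_smul ℚ α
  rw [this]
  rw [smul_add]
  abel

/-- The reflection `s_α` in a root `α`, as a linear automorphism of `V`. -/
def refl (α : V) (hα : α ∈ RS.roots) : V ≃ₗ[ℚ] V :=
  LinearEquiv.ofLinear (RS.reflMap α) (RS.reflMap α)
    (by ext x; exact RS.reflMap_reflMap (RS.coroot_self α hα) x)
    (by ext x; exact RS.reflMap_reflMap (RS.coroot_self α hα) x)

/-- The Weyl group of the root system: the subgroup of `GL(V)` generated by the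
reflections in the roots. -/
def weylGroup : Subgroup (V ≃ₗ[ℚ] V) :=
  Subgroup.closure {w | ∃ (α : V) (hα : α ∈ RS.roots), w = RS.refl α hα}

/-- A base (system of simple roots) of the root system: a linearly independent spanning
subset of `R` such that every root is a linear combination of base elements with integer
coefficients which are either all nonnegative or all nonpositive. -/
structure IsBase (Δ : Finset V) : Prop where
  subset : ↑Δ ⊆ RS.roots
  indep : LinearIndependent ℚ (fun x : (Δ : Set V) => (x : V))
  span_eq_top : Submodule.span ℚ (Δ : Set V) = ⊤
  pos_or_neg : ∀ β ∈ RS.roots,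
    (∃ f : V → ℕ, β = ∑ α ∈ Δ, (f α : ℚ) • α) ∨
    (∃ f : V → ℕ, β = -∑ α ∈ Δ, (f α : ℚ) • α)

/-- A Coxeter element of the Weyl group: a product of the reflections in the simple roots
of some base, each simple root occurring exactly once, in some order. -/
def IsCoxeterElement (c : V ≃ₗ[ℚ] V) : Prop :=
  ∃ (Δ : Finset V) (hΔ : RS.IsBase Δ) (l : List {x // x ∈ Δ}),
    l.Nodup ∧ (∀ α : {x // x ∈ Δ}, α ∈ l) ∧
    c = (l.map fun α => RS.refl α.1 (hΔ.subset α.2)).prod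

/-- Irreducibility of the root system: `R` admits no decomposition into two nonempty
mutually orthogonal subsets (orthogonality expressed via the coroot pairing). -/
def IsIrreducible : Prop :=
  ∀ R₁ R₂ : Set V, R₁ ∪ R₂ = RS.roots →
    (∀ α ∈ R₁, ∀ β ∈ R₂, RS.coroot α β = 0) → R₁ = ∅ ∨ R₂ = ∅

/-- The root lattice `Q`: the subgroup of `V` generated by the roots. -/
def rootLattice : AddSubgroup V := AddSubgroup.closure RS.roots

/-- The weight lattice `P = {x ∈ V : ⟨x, α^∨⟩ ∈ ℤ for every root α}`. -/
def weightLattice : AddSubgroup V where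
  carrier := {x : V | ∀ α ∈ RS.roots, ∃ n : ℤ, RS.coroot α x = (n : ℚ)}
  zero_mem' := fun α _ => ⟨0, by simp⟩
  add_mem' := by
    rintro x y hx hy α hα
    obtain ⟨n, hn⟩ := hx α hα
    obtain ⟨m, hm⟩ := hy α hα
    exact ⟨n + m, by rw [map_add, hn, hm]; push_cast; ring⟩
  neg_mem' := by
    rintro x hx α hα
    obtain ⟨n, hn⟩ := hx α hα
    exact ⟨-n, by rw [map_neg, hn]; push_cast; ring⟩

end RootSystemData

open Finset

namespace AddSubgroup

variable {A : Type*} [AddCommGroup A] {H K : AddSubgroup A} {n : ℕ}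

theorem fg_of_nsmul_mem [IsAddTorsionFree A] (hH : H.FG) (hn : n ≠ 0)
    (hKH : ∀ x ∈ K, n • x ∈ H) : K.FG := by
  have hmap : (toIntSubmodule K).map (n • LinearMap.id : A →ₗ[ℤ] A) ≤ toIntSubmodule H := by
    rintro _ ⟨x, hx, rfl⟩
    exact hKH x hx
  have hH' : (toIntSubmodule H).FG := (Submodule.fg_iff_addSubgroup_fg _).mpr hH
  exact (Submodule.fg_iff_addSubgroup_fg _).mp <|
    Submodule.fg_of_fg_map_injective _ (nsmul_right_injective hn) (hH'.of_le hmap)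

theorem nsmul_eq_zero_of_nsmul_mem (hKH : ∀ x ∈ K, n • x ∈ H) (t : K ⧸ H.addSubgroupOf K) :
    n • t = 0 := by
  obtain ⟨x, rfl⟩ := QuotientAddGroup.mk_surjective t
  rw [← QuotientAddGroup.mk_nsmul, QuotientAddGroup.eq_zero_iff, mem_addSubgroupOf]
  exact hKH x x.2

theorem relIndex_ne_zero_of_nsmul_mem (hK : K.FG) (hn : n ≠ 0) (hKH : ∀ x ∈ K, n • x ∈ H) :
    H.relIndex K ≠ 0 := by
  have : AddGroup.FG K := (AddGroup.fg_iff_addSubgroup_fg K).mpr hK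
  have : Finite (K ⧸ H.addSubgroupOf K) := AddCommGroup.finite_of_fg_isAddTorsion _ fun t =>
    isOfFinAddOrder_iff_nsmul_eq_zero.mpr
      ⟨n, Nat.pos_of_ne_zero hn, nsmul_eq_zero_of_nsmul_mem hKH t⟩
  exact index_ne_zero_of_finite

theorem dvd_of_prime_dvd_relIndex_of_nsmul_mem (hKH : ∀ x ∈ K, n • x ∈ H) {p : ℕ}
    (hp : p.Prime) (hdvd : p ∣ H.relIndex K) (h0 : H.relIndex K ≠ 0) : p ∣ n := by
  have : Finite (K ⧸ H.addSubgroupOf K) := index_ne_zero_iff_finite.mp h0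
  have : Fact p.Prime := ⟨hp⟩
  obtain ⟨t, ht⟩ := exists_prime_addOrderOf_dvd_card' p hdvd
  exact ht ▸ addOrderOf_dvd_of_nsmul_eq_zero (nsmul_eq_zero_of_nsmul_mem hKH t)

end AddSubgroup

theorem smul_sum_range_orderOf_pow_smul {G M : Type*} [Monoid G] [AddCancelCommMonoid M]
    [DistribMulAction G M] (g : G) (x : M) :
    g • ∑ k ∈ range (orderOf g), g ^ k • x = ∑ k ∈ range (orderOf g), g ^ k • x := by
  have h := (sum_range_succ (fun k => g ^ k • x) (orderOf g)).symm.trans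
    (sum_range_succ' (fun k => g ^ k • x) (orderOf g))
  rw [pow_orderOf_eq_one, pow_zero] at h
  simp only [smul_sum, smul_smul, ← pow_succ']
  exact (add_right_cancel h).symm

open scoped Pointwise in
theorem MulAction.mem_stabilizer_set_of_mul_self_eq_one {G α : Type*} [Group G] [MulAction G α]
    {g : G} {s : Set α} (hg : g * g = 1) (hs : ∀ x ∈ s, g • x ∈ s) : g ∈ stabilizer G s :=
  mem_stabilizer_set.mpr fun x => ⟨fun h => by simpa [smul_smul, hg] using hs _ h, hs x⟩

theorem exists_posDef_invariant_bilinForm {K V : Type*} [Field K] [LinearOrder K]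
    [IsStrictOrderedRing K] [AddCommGroup V] [Module K V] [FiniteDimensional K V]
    (G : Subgroup (V ≃ₗ[K] V)) [Finite G] :
    ∃ B : LinearMap.BilinForm K V,
      (∀ x, x ≠ 0 → 0 < B x x) ∧ ∀ g ∈ G, ∀ x y, B (g x) (g y) = B x y := by
  have := Fintype.ofFinite G
  let e := (Module.finBasis K V).equivFun
  let B₀ : LinearMap.BilinForm K V := (dotProductBilin K K).compl₁₂ e.toLinearMap e.toLinearMap
  have hB₀ (x y : V) : B₀ x y = e x ⬝ᵥ e y := rfl
  have hB₀_nonneg (x : V) : 0 ≤ B₀ x x := hB₀ x x ▸ sum_nonneg fun i _ => mul_self_nonneg (e x i)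
  have hB₀_pos (x : V) (hx : x ≠ 0) : 0 < B₀ x x := by
    refine (hB₀_nonneg x).lt_of_ne' ?_
    rw [hB₀, Ne, dotProduct_self_eq_zero]
    exact e.map_ne_zero_iff.mpr hx
  refine ⟨∑ g : G, B₀.compl₁₂ (g : V →ₗ[K] V) g, fun x hx => ?_, fun g hg x y => ?_⟩
  · simp only [LinearMap.sum_apply, LinearMap.compl₁₂_apply]
    exact sum_pos' (fun g _ => hB₀_nonneg _) ⟨1, mem_univ _, hB₀_pos x hx⟩
  · simp only [LinearMap.sum_apply, LinearMap.compl₁₂_apply]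
    refine Fintype.sum_equiv (Equiv.mulRight ⟨g, hg⟩) _ _ fun w => ?_
    simp only [Equiv.coe_mulRight, Subgroup.coe_mul, LinearEquiv.coe_coe, LinearEquiv.mul_apply]

namespace RootSystemData

open Submodule MulAction
open scoped Pointwise

variable {V : Type*} [AddCommGroup V] [Module ℚ V] (RS : RootSystemData V)

theorem refl_apply {α : V} (hα : α ∈ RS.roots) (x : V) :
    RS.refl α hα x = x - RS.coroot α x • α := rfl

theorem refl_mul_self {α : V} (hα : α ∈ RS.roots) : RS.refl α hα * RS.refl α hα = 1 :=
  LinearEquiv.ext (RS.reflMap_reflMap (RS.coroot_self α hα))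

theorem refl_inv {α : V} (hα : α ∈ RS.roots) : (RS.refl α hα)⁻¹ = RS.refl α hα :=
  inv_eq_of_mul_eq_one_right (RS.refl_mul_self hα)

theorem refl_self {α : V} (hα : α ∈ RS.roots) : RS.refl α hα α = -α := by
  rw [refl_apply, RS.coroot_self α hα, two_smul]
  abel

theorem refl_apply_eq_self {α : V} (hα : α ∈ RS.roots) {x : V} (hx : RS.coroot α x = 0) :
    RS.refl α hα x = x := by
  rw [refl_apply, hx, zero_smul, sub_zero]

theorem refl_mem_weylGroup {α : V} (hα : α ∈ RS.roots) : RS.refl α hα ∈ RS.weylGroup :=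
  Subgroup.subset_closure ⟨α, hα, rfl⟩

theorem weylGroup_le_stabilizer_roots : RS.weylGroup ≤ stabilizer (V ≃ₗ[ℚ] V) RS.roots :=
  (Subgroup.closure_le _).mpr <| by
    rintro _ ⟨α, hα, rfl⟩
    exact mem_stabilizer_set_of_mul_self_eq_one (RS.refl_mul_self hα) (RS.reflection_mem α hα)

instance finite_stabilizer_roots : Finite (stabilizer (V ≃ₗ[ℚ] V) RS.roots) := by
  have : Finite RS.roots := RS.finite.to_subtype
  refine Finite.of_injective
    (fun w (β : RS.roots) => (⟨w.1 β, (mem_stabilizer_set.mp w.2 β).mpr β.2⟩ : RS.roots)) ?_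
  intro w₁ w₂ h
  exact Subtype.ext <| LinearEquiv.toLinearMap_injective <| LinearMap.ext_on RS.span_eq_top
    fun β hβ => congrArg Subtype.val (congrFun h ⟨β, hβ⟩)

instance finite_weylGroup : Finite RS.weylGroup :=
  Finite.of_injective _ (Subgroup.inclusion_injective RS.weylGroup_le_stabilizer_roots)

theorem orderOf_pos_of_mem_weylGroup {w : V ≃ₗ[ℚ] V} (hw : w ∈ RS.weylGroup) :
    0 < orderOf w :=
  Subgroup.orderOf_mk (H := RS.weylGroup) w hw ▸ (isOfFinOrder_of_finite _).orderOf_pos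

theorem refl_apply_mem_weightLattice {α : V} (hα : α ∈ RS.roots) {x : V}
    (hx : x ∈ RS.weightLattice) : RS.refl α hα x ∈ RS.weightLattice := by
  intro β hβ
  obtain ⟨m, hm⟩ := hx β hβ
  obtain ⟨n, hn⟩ := hx α hα
  obtain ⟨k, hk⟩ := RS.crystallographic β hβ α hα
  refine ⟨m - n * k, ?_⟩
  rw [refl_apply, map_sub, map_smul, hm, hn, hk, smul_eq_mul]
  push_cast
  ring

theorem sub_refl_apply_mem_rootLattice {α : V} (hα : α ∈ RS.roots) {x : V}
    (hx : x ∈ RS.weightLattice) : x - RS.refl α hα x ∈ RS.rootLattice := by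
  obtain ⟨n, hn⟩ := hx α hα
  rw [refl_apply, sub_sub_cancel, hn, Int.cast_smul_eq_zsmul]
  exact zsmul_mem (AddSubgroup.subset_closure hα) n

theorem weylGroup_le_stabilizer_weightLattice :
    RS.weylGroup ≤ stabilizer (V ≃ₗ[ℚ] V) (RS.weightLattice : Set V) :=
  (Subgroup.closure_le _).mpr <| by
    rintro _ ⟨α, hα, rfl⟩
    exact mem_stabilizer_set_of_mul_self_eq_one (RS.refl_mul_self hα)
      fun x hx => RS.refl_apply_mem_weightLattice hα hx

theorem apply_mem_weightLattice {w : V ≃ₗ[ℚ] V} (hw : w ∈ RS.weylGroup) {x : V}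
    (hx : x ∈ RS.weightLattice) : w x ∈ RS.weightLattice :=
  (mem_stabilizer_set.mp (RS.weylGroup_le_stabilizer_weightLattice hw) x).mpr hx

theorem sub_apply_mem_rootLattice {w : V ≃ₗ[ℚ] V} (hw : w ∈ RS.weylGroup) {x : V}
    (hx : x ∈ RS.weightLattice) : x - w x ∈ RS.rootLattice := by
  induction hw using Subgroup.closure_induction'' generalizing x with
  | mem _ h =>
    obtain ⟨α, hα, rfl⟩ := h
    exact RS.sub_refl_apply_mem_rootLattice hα hx
  | inv_mem _ h =>
    obtain ⟨α, hα, rfl⟩ := h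
    exact RS.refl_inv hα ▸ RS.sub_refl_apply_mem_rootLattice hα hx
  | one => simp
  | mul w₁ w₂ hw₁ hw₂ ih₁ ih₂ =>
    rw [LinearEquiv.mul_apply, ← sub_add_sub_cancel x (w₂ x)]
    exact add_mem (ih₂ hx) (ih₁ (RS.apply_mem_weightLattice hw₂ hx))

theorem sub_listProd_reflMap_apply_mem_span (L : List V) (x : V) :
    x - (L.map RS.reflMap).prod x ∈ span ℚ {a | a ∈ L} := by
  induction L with
  | nil => simp
  | cons a t ih =>
    rw [List.map_cons, List.prod_cons, Module.End.mul_apply, reflMap_apply, sub_sub_eq_add_sub,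
      add_sub_right_comm]
    exact add_mem (span_mono (fun b hb => List.mem_cons_of_mem a hb) ih)
      (smul_mem _ _ (subset_span List.mem_cons_self))

theorem coroot_eq_zero_of_listProd_reflMap_apply_eq_self {L : List V} (hnd : L.Nodup)
    (hL : LinearIndepOn ℚ id {a | a ∈ L}) {x : V} (hx : (L.map RS.reflMap).prod x = x) :
    ∀ a ∈ L, RS.coroot a x = 0 := by
  induction L with
  | nil => simp
  | cons a t ih =>
    rw [List.nodup_cons] at hnd
    have hset : {b | b ∈ a :: t} = insert a {b | b ∈ t} := by ext; simp
    rw [hset, linearIndepOn_id_insert (s := {b | b ∈ t}) hnd.1] at hL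
    rw [List.map_cons, List.prod_cons, Module.End.mul_apply, reflMap_apply] at hx
    set y := (t.map RS.reflMap).prod x
    -- `x - y = -⟨y, a^∨⟩ a` lies in the span of `t`, which does not contain `a`.
    have hya : RS.coroot a y = 0 := by
      by_contra hne
      refine hL.2 ((smul_mem_iff _ hne).mp ?_)
      have hmem : x - y ∈ span ℚ {b | b ∈ t} := RS.sub_listProd_reflMap_apply_mem_span t x
      rwa [← hx, sub_sub_cancel_left, neg_mem_iff] at hmem
    have hxy : y = x := by rw [← hx, hya, zero_smul, sub_zero]
    rintro b (_ | ⟨_, hb⟩)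
    · rwa [← hxy]
    · exact ih hnd.2 hL.1 hxy b hb

theorem coe_listProd_refl {ι : Type*} (l : List ι) (f : ι → V) (hf : ∀ i, f i ∈ RS.roots) :
    ((l.map fun i => RS.refl (f i) (hf i)).prod : V →ₗ[ℚ] V) =
      ((l.map f).map RS.reflMap).prod := by
  induction l with
  | nil => rfl
  | cons i l ih => rw [List.map_cons, List.prod_cons, LinearEquiv.coe_toLinearMap_mul, ih]; rfl

theorem mem_weylGroup_of_isCoxeterElement {c : V ≃ₗ[ℚ] V} (hc : RS.IsCoxeterElement c) :
    c ∈ RS.weylGroup := by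
  obtain ⟨Δ, hΔ, l, -, -, rfl⟩ := hc
  refine list_prod_mem fun w hw => ?_
  obtain ⟨α, -, rfl⟩ := List.mem_map.mp hw
  exact RS.refl_mem_weylGroup _

theorem rootLattice_fg : RS.rootLattice.FG :=
  (AddSubgroup.fg_iff _).mpr ⟨_, rfl, RS.finite⟩

variable [FiniteDimensional ℚ V]

theorem eq_zero_of_forall_coroot_eq_zero {s : Set V} (hs : s ⊆ RS.roots)
    (hspan : span ℚ s = ⊤) {x : V} (hx : ∀ α ∈ s, RS.coroot α x = 0) : x = 0 := by
  obtain ⟨B, hpos, hinv⟩ := exists_posDef_invariant_bilinForm RS.weylGroup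
  -- `s_α` fixes `x` and negates `α`, so `B x α = -B x α`.
  have hBx : B x = 0 := LinearMap.ext_on hspan fun α hα => by
    have := hinv _ (RS.refl_mem_weylGroup (hs hα)) x α
    rw [RS.refl_apply_eq_self _ (hx α hα), refl_self, map_neg] at this
    rw [LinearMap.zero_apply]
    linarith
  by_contra hx0
  exact (hpos x hx0).ne' (by rw [hBx]; rfl)

theorem eq_zero_of_isCoxeterElement_apply_eq_self {c : V ≃ₗ[ℚ] V} (hc : RS.IsCoxeterElement c)
    {x : V} (hx : c x = x) : x = 0 := by
  obtain ⟨Δ, hΔ, l, hnd, hl, rfl⟩ := hc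
  have hL : {a | a ∈ l.map Subtype.val} = Δ := by
    ext a
    simp only [Set.mem_ofPred_eq, List.mem_map, Finset.mem_coe]
    exact ⟨by rintro ⟨b, -, rfl⟩; exact b.2, fun ha => ⟨⟨a, ha⟩, hl _, rfl⟩⟩
  refine RS.eq_zero_of_forall_coroot_eq_zero hΔ.subset hΔ.span_eq_top fun α hα => ?_
  refine RS.coroot_eq_zero_of_listProd_reflMap_apply_eq_self (hnd.map Subtype.val_injective)
    (hL ▸ hΔ.indep) ?_ α (List.mem_map_of_mem (hl ⟨α, hα⟩))
  rw [← RS.coe_listProd_refl]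
  exact hx

theorem orderOf_smul_mem_rootLattice {c : V ≃ₗ[ℚ] V} (hc : RS.IsCoxeterElement c) :
    ∀ x ∈ RS.weightLattice, orderOf c • x ∈ RS.rootLattice := by
  intro x hx
  have horbit : ∑ k ∈ range (orderOf c), (c ^ k) x = 0 :=
    RS.eq_zero_of_isCoxeterElement_apply_eq_self hc (smul_sum_range_orderOf_pow_smul c x)
  have hsum : orderOf c • x = ∑ k ∈ range (orderOf c), (x - (c ^ k) x) := by
    rw [sum_sub_distrib, horbit, sub_zero, sum_const, card_range]
  rw [hsum]
  exact sum_mem fun k _ => RS.sub_apply_mem_rootLattice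
    (pow_mem (RS.mem_weylGroup_of_isCoxeterElement hc) k) hx

end RootSystemData

/-- Let `c` be a Coxeter element of the Weyl group, of order `h`.
Then `h·P ⊆ Q`.  Consequently the index `[P : Q]` is finite and every prime dividing
`[P : Q]` divides `h`. -/
theorem RootSystemData.coxeterNumber_smul_weightLattice_le_rootLattice
    {V : Type*} [AddCommGroup V] [Module ℚ V] [FiniteDimensional ℚ V]
    (RS : RootSystemData V) (c : V ≃ₗ[ℚ] V) (hc : RS.IsCoxeterElement c) :
    (∀ x ∈ RS.weightLattice, (orderOf c) • x ∈ RS.rootLattice) ∧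
    RS.rootLattice.relIndex RS.weightLattice ≠ 0 ∧
    ∀ ℓ : ℕ, ℓ.Prime → ℓ ∣ RS.rootLattice.relIndex RS.weightLattice → ℓ ∣ orderOf c := by
  have hsmul := RS.orderOf_smul_mem_rootLattice hc
  have hc₀ : orderOf c ≠ 0 :=
    (RS.orderOf_pos_of_mem_weylGroup (RS.mem_weylGroup_of_isCoxeterElement hc)).ne'
  have : IsAddTorsionFree V := .of_module_rat V
  have hindex : RS.rootLattice.relIndex RS.weightLattice ≠ 0 :=
    AddSubgroup.relIndex_ne_zero_of_nsmul_mem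
      (AddSubgroup.fg_of_nsmul_mem RS.rootLattice_fg hc₀ hsmul) hc₀ hsmul
  exact ⟨hsmul, hindex, fun ℓ hℓ hdvd =>
    AddSubgroup.dvd_of_prime_dvd_relIndex_of_nsmul_mem hsmul hℓ hdvd hindex⟩
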